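/- arXiv:math-ph/0701031 — 2 statements merged into one kernel-verified Lean document; each statement's English description precedes it below -/
import Mathlib

section
/- Let H be a finite-dimensional complex Hilbert space, let Y be a finite set equipped with its power-set σ-algebra, let P be a PV measure on Y, let M be a POV measure on a measurable space (X, 𝒜), and let ν be a weak Markov kernel with respect to M such that P = ν∘M. Then there exists a measurable function f : X → Y such that P(B) = M(f⁻¹(B)) for every B ⊆ Y. -/
open MeasureTheory ComplexOrder
open scoped Classical

noncomputable section

variable {H : Type*} [NormedAddCommGroup H] [InnerProductSpace ℂ H] [CompleteSpace H]

/-- A (normalized) positive operator valued measure on the measurable space `X`: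
`0 ≤ M A ≤ 1`, `M ∅ = 0`, `M univ = 1`, and `M` is weakly σ-additive. -/
structure IsPOVM {X : Type*} [MeasurableSpace X] (M : Set X → (H →L[ℂ] H)) : Prop where
  pos : ∀ A : Set X, MeasurableSet A → (M A).IsPositive
  le_one : ∀ A : Set X, MeasurableSet A → ((1 : H →L[ℂ] H) - M A).IsPositive
  empty : M ∅ = 0
  univ : M Set.univ = 1
  m_iUnion : ∀ (ψ : H) (A : ℕ → Set X), (∀ n, MeasurableSet (A n)) →
    Pairwise (Function.onFun Disjoint A) →
    HasSum (fun n => (inner ℂ ψ (M (A n) ψ) : ℂ)) (inner ℂ ψ (M (⋃ n, A n) ψ))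

/-- A projection valued (PV) measure: a POV measure whose values are orthogonal
projections (self-adjointness is part of positivity). -/
def IsPVM {X : Type*} [MeasurableSpace X] (M : Set X → (H →L[ℂ] H)) : Prop :=
  IsPOVM M ∧ ∀ A : Set X, MeasurableSet A → M A * M A = M A

/-- The finite measure `μ_ψ^M (A) = ⟨ψ, M(A) ψ⟩` associated to a POV measure `M`
and a vector `ψ`. (Junk value `0` if `M` is not a POV measure.) -/
def vecMeasure {X : Type*} [MeasurableSpace X] (M : Set X → (H →L[ℂ] H)) (ψ : H) :
    Measure X :=
  if hM : IsPOVM M then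
    Measure.ofMeasurable (fun A _ => ENNReal.ofReal (inner ℂ ψ (M A ψ) : ℂ).re)
      (by simp [hM.empty])
      (by
        intro A hA hd
        have h := hM.m_iUnion ψ A hA hd
        have hre : HasSum (fun n => ((inner ℂ ψ (M (A n) ψ) : ℂ)).re)
            ((inner ℂ ψ (M (⋃ n, A n) ψ) : ℂ)).re := h.mapL Complex.reCLM
        have hnn : ∀ n, 0 ≤ ((inner ℂ ψ (M (A n) ψ) : ℂ)).re := by
          intro n
          have h2 := (hM.pos (A n) (hA n)).2 ψ
          rw [ContinuousLinearMap.reApplyInnerSelf] at h2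
          simpa [inner_re_symm] using h2
        try dsimp only
        rw [← hre.tsum_eq]
        exact ENNReal.ofReal_tsum_of_nonneg hnn hre.summable)
  else 0

/-- `ν : X × ℬ → ℝ` is a weak Markov kernel with respect to the POV measure `M`. -/
def IsWeakMarkovKernel {X Y : Type*} [MeasurableSpace X] [MeasurableSpace Y]
    (M : Set X → (H →L[ℂ] H)) (ν : X → Set Y → ℝ) : Prop :=
  (∀ B : Set Y, MeasurableSet B → Measurable fun x => ν x B) ∧
  ∀ ψ : H,
    (∀ B : Set Y, MeasurableSet B →
      ∀ᵐ x ∂(vecMeasure M ψ), 0 ≤ ν x B ∧ ν x B ≤ 1) ∧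
    (∀ᵐ x ∂(vecMeasure M ψ), ν x Set.univ = 1) ∧
    (∀ᵐ x ∂(vecMeasure M ψ), ν x ∅ = 0) ∧
    (∀ B : ℕ → Set Y, (∀ n, MeasurableSet (B n)) → Pairwise (Function.onFun Disjoint B) →
      ∀ᵐ x ∂(vecMeasure M ψ), HasSum (fun n => ν x (B n)) (ν x (⋃ n, B n)))

/-- `F = ν ∘ M` : the POV measure `F` is the smearing of `M` with respect to `ν`. -/
def IsSmearing {X Y : Type*} [MeasurableSpace X] [MeasurableSpace Y]
    (M : Set X → (H →L[ℂ] H)) (ν : X → Set Y → ℝ) (F : Set Y → (H →L[ℂ] H)) : Prop :=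
  ∀ B : Set Y, MeasurableSet B → ∀ ψ : H,
    (inner ℂ ψ (F B ψ) : ℂ) = ((∫ x, ν x B ∂(vecMeasure M ψ) : ℝ) : ℂ)

/-- A weak Markov kernel has values in `{0,1}`. -/
def HasZeroOneValues {X Y : Type*} [MeasurableSpace X] [MeasurableSpace Y]
    (M : Set X → (H →L[ℂ] H)) (ν : X → Set Y → ℝ) : Prop :=
  ∀ B : Set Y, MeasurableSet B → ∀ ψ : H,
    ∀ᵐ x ∂(vecMeasure M ψ), ν x B = 0 ∨ ν x B = 1

/-!
If `P = ν ∘ M` and `P B` is a projection, testing the smearing identity on the range and on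
the kernel of `P B` shows that `ν(·, B)` is `1`, resp. `0`, almost everywhere there. Since
`μ_ψ^M(E) = 0` exactly when `M(E) ψ = 0`, a condition linear in `ψ`, it follows that
`ν(·, B) ∈ {0, 1}` holds `μ_ψ^M`-a.e. for every `ψ`. As `Y` has finitely many subsets, almost
every `ν(x, ·)` is then a finitely additive `{0, 1}`-valued probability on `Y`, i.e. a Dirac mass
at some point `f x`, and `⟨ψ, P(B) ψ⟩ = ∫ 1_B(f x) dμ_ψ^M = ⟨ψ, M(f⁻¹ B) ψ⟩`;
polarization gives `P(B) = M(f⁻¹ B)`.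
-/

open Set Filter
open scoped InnerProductSpace

section

omit [CompleteSpace H]

theorem ContinuousLinearMap.IsPositive.apply_eq_zero_of_inner_eq_zero [CompleteSpace H]
    {T : H →L[ℂ] H} (hT : T.IsPositive) {x : H} (hx : ⟪x, T x⟫_ℂ = 0) : T x = 0 := by
  have hT0 : 0 ≤ T := (ContinuousLinearMap.nonneg_iff_isPositive T).2 hT
  set S := CFC.sqrt T
  have hS : IsSelfAdjoint S := (CFC.sqrt_nonneg T).isSelfAdjoint
  have hTS : T x = S (S x) := by rw [← CFC.sqrt_mul_sqrt_self T hT0]; rfl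
  have hSx : S x = 0 := by
    rw [← inner_self_eq_zero (𝕜 := ℂ), ← ContinuousLinearMap.adjoint_inner_right, hS.adjoint_eq,
      ← hTS, hx]
  rw [hTS, hSx, map_zero]

theorem ContinuousLinearMap.ext_inner_apply_self {S T : H →L[ℂ] H}
    (h : ∀ x, ⟪x, S x⟫_ℂ = ⟪x, T x⟫_ℂ) : S = T :=
  ContinuousLinearMap.coe_injective <| (ext_inner_map _ _).1 fun x => by
    simp only [ContinuousLinearMap.coe_coe]
    rw [← inner_conj_symm, h, inner_conj_symm]

section POVM

variable {X : Type*} [MeasurableSpace X] {M : Set X → (H →L[ℂ] H)}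

instance vecMeasure.instIsFiniteMeasure (M : Set X → (H →L[ℂ] H)) (ψ : H) :
    IsFiniteMeasure (vecMeasure M ψ) := by
  by_cases hM : IsPOVM M
  · constructor
    rw [vecMeasure, dif_pos hM, Measure.ofMeasurable_apply _ MeasurableSet.univ]
    exact ENNReal.ofReal_lt_top
  · rw [vecMeasure, dif_neg hM]
    infer_instance

namespace IsPOVM

theorem inner_eq_vecMeasure_real (hM : IsPOVM M) {A : Set X} (hA : MeasurableSet A) (ψ : H) :
    ⟪ψ, M A ψ⟫_ℂ = ((vecMeasure M ψ).real A : ℂ) := by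
  have hnonneg : 0 ≤ ⟪ψ, M A ψ⟫_ℂ := (hM.pos A hA).inner_nonneg_right ψ
  rw [measureReal_def, vecMeasure, dif_pos hM, Measure.ofMeasurable_apply A hA,
    ENNReal.toReal_ofReal (Complex.nonneg_iff.1 hnonneg).1]
  exact Complex.eq_re_of_ofReal_le (by rwa [Complex.ofReal_zero])

theorem vecMeasure_real_univ (hM : IsPOVM M) (ψ : H) :
    (vecMeasure M ψ).real Set.univ = ‖ψ‖ ^ 2 := by
  have h := hM.inner_eq_vecMeasure_real MeasurableSet.univ ψ
  rw [hM.univ, one_apply_eq_self, inner_self_eq_norm_sq_to_K, ← RCLike.ofReal_pow] at h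
  exact (Complex.ofReal_injective h).symm

theorem vecMeasure_eq_zero_iff [CompleteSpace H] (hM : IsPOVM M) {A : Set X}
    (hA : MeasurableSet A) (ψ : H) :
    vecMeasure M ψ A = 0 ↔ M A ψ = 0 := by
  rw [← measureReal_eq_zero_iff, ← Complex.ofReal_eq_zero, ← hM.inner_eq_vecMeasure_real hA]
  exact ⟨(hM.pos A hA).apply_eq_zero_of_inner_eq_zero, fun h => by rw [h, inner_zero_right]⟩

theorem ae_add [CompleteSpace H] (hM : IsPOVM M) {p : X → Prop} (hp : MeasurableSet {x | p x})
    {φ χ : H} (hφ : ∀ᵐ x ∂vecMeasure M φ, p x) (hχ : ∀ᵐ x ∂vecMeasure M χ, p x) :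
    ∀ᵐ x ∂vecMeasure M (φ + χ), p x := by
  have hE : MeasurableSet {x | ¬p x} := hp.compl
  rw [ae_iff, hM.vecMeasure_eq_zero_iff hE] at hφ hχ ⊢
  rw [map_add, hφ, hχ, add_zero]

theorem nonempty [Nontrivial H] (hM : IsPOVM M) : Nonempty X := by
  by_contra hX
  have h := hM.univ
  rw [univ_eq_empty_iff.2 (not_nonempty_iff.1 hX), hM.empty] at h
  exact zero_ne_one h

end IsPOVM

end POVM

namespace IsWeakMarkovKernel

variable {X Y : Type*} [MeasurableSpace X] [MeasurableSpace Y]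
  {M : Set X → (H →L[ℂ] H)} {ν : X → Set Y → ℝ}

theorem integrable (hν : IsWeakMarkovKernel M ν) {B : Set Y} (hB : MeasurableSet B) (ψ : H) :
    Integrable (fun x => ν x B) (vecMeasure M ψ) := by
  refine (integrable_const (1 : ℝ)).mono' (hν.1 B hB).aestronglyMeasurable ?_
  filter_upwards [(hν.2 ψ).1 B hB] with x hx
  rw [Real.norm_eq_abs, abs_le]
  exact ⟨by linarith [hx.1], hx.2⟩

theorem ae_iUnion {ι : Type*} [Encodable ι] (hν : IsWeakMarkovKernel M ν) {A : ι → Set Y}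
    (hA : ∀ i, MeasurableSet (A i)) (hd : Pairwise (Function.onFun Disjoint A)) (ψ : H) :
    ∀ᵐ x ∂vecMeasure M ψ, ν x (⋃ i, A i) = ∑' i, ν x (A i) := by
  -- `Encodable.decode₂` spreads the family over `ℕ`, padding with `∅`.
  filter_upwards [(hν.2 ψ).2.2.2 _ (fun n => .iUnion fun i => .iUnion fun _ => hA i)
    (Encodable.iUnion_decode₂_disjoint_on hd), (hν.2 ψ).2.2.1] with x hsum hempty
  rw [← Encodable.iUnion_decode₂, ← hsum.tsum_eq, tsum_iUnion_decode₂ (ν x) hempty]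

theorem ae_union (hν : IsWeakMarkovKernel M ν) {A B : Set Y} (hA : MeasurableSet A)
    (hB : MeasurableSet B) (hAB : Disjoint A B) (ψ : H) :
    ∀ᵐ x ∂vecMeasure M ψ, ν x (A ∪ B) = ν x A + ν x B := by
  filter_upwards [hν.ae_iUnion (A := fun b => cond b A B) (Bool.forall_bool.2 ⟨hB, hA⟩)
    (pairwise_disjoint_on_bool.2 hAB) ψ] with x hx
  rw [union_eq_iUnion, hx, tsum_fintype, Fintype.sum_bool]
  rfl

end IsWeakMarkovKernel

section ZeroOneAdditive

variable {Y : Type*} {m : Set Y → ℝ}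

theorem exists_singleton_eq_one_of_zero_one_additive [Finite Y] (h01 : ∀ B, m B = 0 ∨ m B = 1)
    (hadd : ∀ A B, Disjoint A B → m (A ∪ B) = m A + m B) (huniv : m univ = 1) :
    ∃ y, m {y} = 1 := by
  have hempty : m ∅ = 0 := by
    have h := hadd ∅ ∅ (disjoint_empty ∅)
    rw [union_self] at h
    linarith
  suffices ∀ s : Set Y, s.Finite → m s = 1 → ∃ y, m {y} = 1 from this univ finite_univ huniv
  intro s hs
  induction s, hs using Set.Finite.induction_on with
  | empty => intro h; linarith
  | @insert a s ha _ ih =>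
    intro h
    rw [insert_eq, hadd _ _ (disjoint_singleton_left.2 ha)] at h
    rcases h01 {a} with ha0 | ha1
    · exact ih (by linarith)
    · exact ⟨a, ha1⟩

theorem eq_indicator_of_zero_one_additive (h01 : ∀ B, m B = 0 ∨ m B = 1)
    (hadd : ∀ A B, Disjoint A B → m (A ∪ B) = m A + m B) (huniv : m univ = 1) {y : Y}
    (hy : m {y} = 1) (B : Set Y) : m B = B.indicator 1 y := by
  have hmem : ∀ B, y ∈ B → m B = 1 := by
    intro B hB
    have h := hadd {y} (B \ {y}) disjoint_sdiff_right
    rw [singleton_union, insert_sdiff_singleton, insert_eq_of_mem hB, hy] at h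
    rcases h01 B with h0 | h1
    · rcases h01 (B \ {y}) with h0' | h1' <;> linarith
    · exact h1
  by_cases hB : y ∈ B
  · rw [indicator_of_mem hB, hmem B hB, Pi.one_apply]
  · have h := hadd B Bᶜ disjoint_compl_right
    rw [union_compl_self, huniv, hmem Bᶜ hB] at h
    rw [indicator_of_notMem hB]
    linarith

end ZeroOneAdditive

section Smearing

variable {X Y : Type*} [MeasurableSpace X] [MeasurableSpace Y]
  {M : Set X → (H →L[ℂ] H)} {ν : X → Set Y → ℝ} {P : Set Y → (H →L[ℂ] H)}

namespace IsSmearing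

theorem ae_eq_zero_of_apply_eq_zero (hs : IsSmearing M ν P) (hν : IsWeakMarkovKernel M ν)
    {B : Set Y} (hB : MeasurableSet B) {φ : H} (hφ : P B φ = 0) :
    ∀ᵐ x ∂vecMeasure M φ, ν x B = 0 := by
  have hint : ∫ x, ν x B ∂vecMeasure M φ = ∫ _, 0 ∂vecMeasure M φ := by
    have h := hs B hB φ
    rw [hφ, inner_zero_right] at h
    rw [integral_zero]
    exact_mod_cast h.symm
  have hle : (fun _ => (0 : ℝ)) ≤ᵐ[vecMeasure M φ] fun x => ν x B :=
    ((hν.2 φ).1 B hB).mono fun _ hx => hx.1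
  filter_upwards [(integral_eq_iff_of_ae_le (integrable_zero _ _ _) (hν.integrable hB φ)
    hle).1 hint.symm] with x hx using hx.symm

theorem ae_eq_one_of_apply_eq_self (hs : IsSmearing M ν P) (hM : IsPOVM M)
    (hν : IsWeakMarkovKernel M ν) {B : Set Y} (hB : MeasurableSet B) {φ : H} (hφ : P B φ = φ) :
    ∀ᵐ x ∂vecMeasure M φ, ν x B = 1 := by
  have hint : ∫ x, ν x B ∂vecMeasure M φ = ∫ _, 1 ∂vecMeasure M φ := by
    have h := hs B hB φ
    rw [hφ, inner_self_eq_norm_sq_to_K, ← RCLike.ofReal_pow] at h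
    rw [integral_const, smul_eq_mul, mul_one, hM.vecMeasure_real_univ]
    exact (Complex.ofReal_injective h).symm
  have hle : (fun x => ν x B) ≤ᵐ[vecMeasure M φ] fun _ => (1 : ℝ) :=
    ((hν.2 φ).1 B hB).mono fun _ hx => hx.2
  exact (integral_eq_iff_of_ae_le (hν.integrable hB φ) (integrable_const _) hle).1 hint

theorem hasZeroOneValues [CompleteSpace H] (hs : IsSmearing M ν P) (hM : IsPOVM M)
    (hν : IsWeakMarkovKernel M ν) (hP : IsPVM P) : HasZeroOneValues M ν := by
  intro B hB ψ
  set T := P B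
  have hTT : ∀ φ, T (T φ) = T φ := fun φ => congr($(hP.2 B hB) φ)
  have h1 := hs.ae_eq_one_of_apply_eq_self hM hν hB (hTT ψ)
  have h0 := hs.ae_eq_zero_of_apply_eq_zero hν hB (φ := ψ - T ψ) (by rw [map_sub, hTT, sub_self])
  have hp : MeasurableSet {x | ν x B = 0 ∨ ν x B = 1} :=
    (hν.1 B hB) ((measurableSet_singleton 0).union (measurableSet_singleton 1))
  simpa only [add_sub_cancel] using
    hM.ae_add hp (h1.mono fun _ => Or.inr) (h0.mono fun _ => Or.inl)

theorem apply_eq_preimage_of_ae_eq_indicator (hs : IsSmearing M ν P) (hM : IsPOVM M)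
    {f : X → Y} (hf : Measurable f) {B : Set Y} (hB : MeasurableSet B)
    (hνf : ∀ ψ, ∀ᵐ x ∂vecMeasure M ψ, ν x B = B.indicator 1 (f x)) : P B = M (f ⁻¹' B) := by
  refine ContinuousLinearMap.ext_inner_apply_self fun ψ => ?_
  rw [hs B hB ψ, hM.inner_eq_vecMeasure_real (hf hB), integral_congr_ae (hνf ψ),
    ← integral_indicator_one (hf hB)]
  rfl

end IsSmearing

end Smearing

section DiracPoint

variable {X Y : Type*} [MeasurableSpace X] [MeasurableSpace Y] [Nonempty Y]

/-- A point `y` with `ν x {y} = 1`; an arbitrary point if there is none. -/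
def diracPoint (ν : X → Set Y → ℝ) (x : X) : Y :=
  Classical.epsilon fun y => ν x {y} = 1

theorem measurable_diracPoint [Finite Y] {ν : X → Set Y → ℝ}
    (hν : ∀ y, Measurable fun x => ν x {y}) : Measurable (diracPoint ν) := by
  have hS : Measurable fun x => {y | ν x {y} = 1} :=
    measurable_set_iff.2 fun y => measurableSet_setOfPred.1 ((hν y) (measurableSet_singleton 1))
  exact (Measurable.of_discrete (f := fun s : Set Y => Classical.epsilon (· ∈ s))).comp hS

theorem ae_eq_indicator_diracPoint [Finite Y] {M : Set X → (H →L[ℂ] H)} {ν : X → Set Y → ℝ}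
    (hν : IsWeakMarkovKernel M ν) (h01 : HasZeroOneValues M ν)
    (hpow : ∀ B : Set Y, MeasurableSet B) (ψ : H) :
    ∀ᵐ x ∂vecMeasure M ψ, ∀ B, ν x B = B.indicator 1 (diracPoint ν x) := by
  have h01' : ∀ᵐ x ∂vecMeasure M ψ, ∀ B, ν x B = 0 ∨ ν x B = 1 :=
    eventually_all.2 fun B => h01 B (hpow B) ψ
  have hadd : ∀ᵐ x ∂vecMeasure M ψ, ∀ A B, Disjoint A B → ν x (A ∪ B) = ν x A + ν x B :=
    eventually_all.2 fun A => eventually_all.2 fun B =>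
      eventually_imp_distrib_left.2 fun hAB => hν.ae_union (hpow A) (hpow B) hAB ψ
  filter_upwards [h01', hadd, (hν.2 ψ).2.1] with x h01x haddx hunivx
  exact eq_indicator_of_zero_one_additive h01x haddx hunivx <| Classical.epsilon_spec <|
    exists_singleton_eq_one_of_zero_one_additive h01x haddx hunivx

end DiracPoint

end

theorem pv_on_finite_set_smearing_is_function_general
    [Nontrivial H]
    {Y : Type*} [Fintype Y] [MeasurableSpace Y]
    (hpow : ∀ B : Set Y, MeasurableSet B)
    {X : Type*} [MeasurableSpace X]
    (P : Set Y → (H →L[ℂ] H)) (hP : IsPVM P)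
    (M : Set X → (H →L[ℂ] H)) (hM : IsPOVM M)
    (ν : X → Set Y → ℝ) (hν : IsWeakMarkovKernel M ν) (hs : IsSmearing M ν P) :
    ∃ f : X → Y, Measurable f ∧ ∀ B : Set Y, P B = M (f ⁻¹' B) := by
  have : Nonempty Y := hP.1.nonempty
  have hf : Measurable (diracPoint ν) := measurable_diracPoint fun y => hν.1 {y} (hpow {y})
  have hdirac := ae_eq_indicator_diracPoint hν (hs.hasZeroOneValues hM hν hP) hpow
  refine ⟨diracPoint ν, hf, fun B => ?_⟩
  exact hs.apply_eq_preimage_of_ae_eq_indicator hM hf (hpow B) fun ψ =>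
    (hdirac ψ).mono fun _ hx => hx B

/-- In finite dimension, a PV measure `P` on a finite set `Y`
(with the power-set σ-algebra) which is a smearing of a POV measure `M` is a
function of `M`. -/
theorem pv_on_finite_set_smearing_is_function
    [FiniteDimensional ℂ H] [Nontrivial H]
    {Y : Type*} [Fintype Y] [MeasurableSpace Y]
    (hpow : ∀ B : Set Y, MeasurableSet B)
    {X : Type*} [MeasurableSpace X]
    (P : Set Y → (H →L[ℂ] H)) (hP : IsPVM P)
    (M : Set X → (H →L[ℂ] H)) (hM : IsPOVM M)
    (ν : X → Set Y → ℝ) (hν : IsWeakMarkovKernel M ν) (hs : IsSmearing M ν P) :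
    ∃ f : X → Y, Measurable f ∧ ∀ B : Set Y, P B = M (f ⁻¹' B) :=
  pv_on_finite_set_smearing_is_function_general hpow P hP M hM ν hν hs

end
end

section
/- Let H be a complex separable Hilbert space, let P be a PV measure on a measurable space (Y, ℬ) and let M be a POV measure on a measurable space (X, 𝒜) such that ℛ(P) ⊆ ℛ(M). Choose π : ℬ → 𝒜 with P(B) = M(π(B)) for all B ∈ ℬ. Then ν(x, B) := χ_{π(B)}(x) (the indicator function of π(B)) defines a weak Markov kernel with respect to M, with values in {0,1}, such that P = ν∘M. -/
open MeasureTheory ComplexOrder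
open scoped Classical

noncomputable section

variable {H : Type*} [NormedAddCommGroup H] [InnerProductSpace ℂ H] [CompleteSpace H]

/-!
A positive operator `T` with `T ≤ Q` for a projection `Q` satisfies `T = T Q`, so a positive
operator dominated by two projections with `Q R = 0` vanishes. As the `P B = M (π B)` are
projections, this kills `M (π B ∩ π B')` for disjoint `B, B'` (dominated by `P B` and `P B'`)
and `M (π B \ π B')` for `B ⊆ B'` (dominated by `P B` and `P B'ᶜ`). Hence for every `ψ` the sets
`π (Bₙ)` are `μ_ψ`-a.e. disjoint and a.e. contained in `π (⋃ Bₙ)`; since their masses add up to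
`⟪ψ, P (⋃ Bₙ) ψ⟫ = μ_ψ (π (⋃ Bₙ))` they cover it a.e., which is the a.e. σ-additivity of the
indicators. The smearing identity is `∫ χ_{π B} dμ_ψ = ⟪ψ, M (π B) ψ⟫`.
-/

open scoped InnerProductSpace

theorem ContinuousLinearMap.eq_of_forall_re_inner_eq {S T : H →L[ℂ] H} (hS : IsSelfAdjoint S)
    (hT : IsSelfAdjoint T) (h : ∀ x, (⟪x, S x⟫_ℂ).re = (⟪x, T x⟫_ℂ).re) : S = T := by
  have hST : (S - T).IsSymmetric := (hS.sub hT).isSymmetric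
  rw [← sub_eq_zero, ← ContinuousLinearMap.coe_inj, ContinuousLinearMap.toLinearMap_zero,
    ← hST.inner_map_self_eq_zero]
  intro x
  rw [← hST.coe_re_inner_apply_self, inner_re_symm]
  simp [inner_sub_right, h x]

theorem IsStarProjection.eq_zero_of_le_of_le {A : Type*} [NonUnitalCStarAlgebra A]
    [PartialOrder A] [StarOrderedRing A] {a p q : A} (hp : IsStarProjection p)
    (hq : IsStarProjection q) (hpq : p * q = 0) (ha : 0 ≤ a) (hap : a ≤ p) (haq : a ≤ q) :
    a = 0 := by
  have hap' : a * p = a := (hp.mul_right_and_mul_left_of_nonneg_of_le ha hap).1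
  have haq' : a * q = a := (hq.mul_right_and_mul_left_of_nonneg_of_le ha haq).1
  rw [← haq', ← hap', mul_assoc, hpq, mul_zero]

theorem hasSum_indicator_apply_of_mem_unique {X ι E : Type*} [AddCommMonoid E]
    [TopologicalSpace E] {s : ι → Set X} {A : Set X} (f : X → E) {x : X}
    (hs : ∀ i j, x ∈ s i → x ∈ s j → i = j) (hA : x ∈ A ↔ ∃ i, x ∈ s i) :
    HasSum (fun i => (s i).indicator f x) (A.indicator f x) := by
  by_cases hx : ∃ i, x ∈ s i
  · obtain ⟨i, hi⟩ := hx
    rw [Set.indicator_of_mem (hA.2 ⟨i, hi⟩), ← Set.indicator_of_mem hi f]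
    exact hasSum_single i fun j hj => Set.indicator_of_notMem (fun hxj => hj (hs j i hxj hi)) f
  · simp only [not_exists] at hx
    simp [Set.indicator_of_notMem, hx, mt hA.1]

theorem MeasureTheory.ae_hasSum_indicator {X ι E : Type*} [MeasurableSpace X] [Countable ι]
    [AddCommMonoid E] [TopologicalSpace E] {μ : Measure X} {s : ι → Set X} {A : Set X}
    (f : X → E) (hs : ∀ i, NullMeasurableSet (s i) μ)
    (hd : Pairwise (Function.onFun (AEDisjoint μ) s))
    (hsA : ∀ i, s i ≤ᵐ[μ] A) (hμA : μ A ≤ ∑' i, μ (s i)) (hA : μ A ≠ ⊤) :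
    ∀ᵐ x ∂μ, HasSum (fun i => (s i).indicator f x) (A.indicator f x) := by
  have hU : (⋃ i, s i) =ᵐ[μ] A := by
    refine ae_eq_of_ae_subset_of_measure_ge ?_ (by rwa [measure_iUnion₀ hd hs]) (.iUnion hs) hA
    rw [ae_le_set, Set.iUnion_sdiff]
    exact measure_iUnion_null fun i => ae_le_set.1 (hsA i)
  have hunique : ∀ᵐ x ∂μ, ∀ i j, x ∈ s i → x ∈ s j → i = j := by
    refine ae_all_iff.2 fun i => ae_all_iff.2 fun j => ?_
    by_cases hij : i = j
    · exact .of_forall fun _ _ _ => hij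
    · filter_upwards [measure_eq_zero_iff_ae_notMem.1 (hd hij)] with x hx hi hj
      exact (hx ⟨hi, hj⟩).elim
  filter_upwards [hU, hunique] with x hxU hx
  refine hasSum_indicator_apply_of_mem_unique f hx ?_
  rw [← Set.mem_iUnion]
  exact Iff.of_eq hxU.symm

namespace IsPOVM

section InnerProductSpace

variable {E X : Type*} [NormedAddCommGroup E] [InnerProductSpace ℂ E] [MeasurableSpace X]
  {M : Set X → (E →L[ℂ] E)} {A : Set X}

theorem nonneg (hM : IsPOVM M) (hA : MeasurableSet A) : 0 ≤ M A :=
  (ContinuousLinearMap.nonneg_iff_isPositive _).2 (hM.pos A hA)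

theorem re_inner_nonneg (hM : IsPOVM M) (hA : MeasurableSet A) (ψ : E) :
    0 ≤ (⟪ψ, M A ψ⟫_ℂ).re :=
  (hM.pos A hA).re_inner_nonneg_right ψ

theorem vecMeasure_apply (hM : IsPOVM M) (ψ : E) (hA : MeasurableSet A) :
    vecMeasure M ψ A = ENNReal.ofReal (⟪ψ, M A ψ⟫_ℂ).re := by
  rw [vecMeasure, dif_pos hM, Measure.ofMeasurable_apply A hA]

theorem isFiniteMeasure_vecMeasure (hM : IsPOVM M) (ψ : E) : IsFiniteMeasure (vecMeasure M ψ) :=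
  ⟨by simp [hM.vecMeasure_apply ψ .univ]⟩

theorem vecMeasure_real_apply (hM : IsPOVM M) (ψ : E) (hA : MeasurableSet A) :
    (vecMeasure M ψ).real A = (⟪ψ, M A ψ⟫_ℂ).re := by
  rw [measureReal_def, hM.vecMeasure_apply ψ hA, ENNReal.toReal_ofReal (hM.re_inner_nonneg hA ψ)]

theorem vecMeasure_eq_zero (hM : IsPOVM M) (ψ : E) (hA : MeasurableSet A) (h : M A = 0) :
    vecMeasure M ψ A = 0 := by
  simp [hM.vecMeasure_apply ψ hA, h]

end InnerProductSpace

variable {X : Type*} [MeasurableSpace X] {M : Set X → (H →L[ℂ] H)} {A A' : Set X}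

theorem union (hM : IsPOVM M) (hA : MeasurableSet A) (hA' : MeasurableSet A')
    (hd : Disjoint A A') : M (A ∪ A') = M A + M A' := by
  refine ContinuousLinearMap.eq_of_forall_re_inner_eq (hM.pos _ (hA.union hA')).isSelfAdjoint
    ((hM.pos A hA).isSelfAdjoint.add (hM.pos A' hA').isSelfAdjoint) fun ψ => ?_
  have := hM.isFiniteMeasure_vecMeasure ψ
  rw [← hM.vecMeasure_real_apply ψ (hA.union hA'), measureReal_union hd hA',
    hM.vecMeasure_real_apply ψ hA, hM.vecMeasure_real_apply ψ hA']
  simp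

theorem mono (hM : IsPOVM M) (hA : MeasurableSet A) (hA' : MeasurableSet A') (h : A ⊆ A') :
    M A ≤ M A' := by
  rw [← Set.union_sdiff_cancel h, hM.union hA (hA'.diff hA) Set.disjoint_sdiff_right]
  exact le_add_of_nonneg_right (hM.nonneg (hA'.diff hA))

theorem compl (hM : IsPOVM M) (hA : MeasurableSet A) : M Aᶜ = 1 - M A := by
  rw [eq_sub_iff_add_eq', ← hM.union hA hA.compl disjoint_compl_right, Set.union_compl_self,
    hM.univ]

end IsPOVM

namespace IsPVM

variable {Y : Type*} [MeasurableSpace Y] {P : Set Y → (H →L[ℂ] H)} {B B' : Set Y}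

theorem isStarProjection (hP : IsPVM P) (hB : MeasurableSet B) : IsStarProjection (P B) :=
  ⟨hP.2 B hB, (hP.1.pos B hB).isSelfAdjoint⟩

theorem mul_eq_zero_of_disjoint (hP : IsPVM P) (hB : MeasurableSet B) (hB' : MeasurableSet B')
    (hd : Disjoint B B') : P B * P B' = 0 := by
  have hle : P B ≤ 1 - P B' := hP.1.compl hB' ▸ hP.1.mono hB hB'.compl hd.subset_compl_right
  have h := ((hP.isStarProjection hB').one_sub.mul_right_and_mul_left_of_nonneg_of_le
    (hP.1.nonneg hB) hle).1
  rwa [mul_sub, mul_one, sub_eq_self] at h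

theorem eq_zero_of_le_of_le (hP : IsPVM P) (hB : MeasurableSet B) (hB' : MeasurableSet B')
    (hd : Disjoint B B') {T : H →L[ℂ] H} (hT : 0 ≤ T) (hTB : T ≤ P B) (hTB' : T ≤ P B') :
    T = 0 :=
  (hP.isStarProjection hB).eq_zero_of_le_of_le (hP.isStarProjection hB')
    (hP.mul_eq_zero_of_disjoint hB hB' hd) hT hTB hTB'

end IsPVM

section RangeInclusion

variable {X Y : Type*} [MeasurableSpace X] [MeasurableSpace Y] {P : Set Y → (H →L[ℂ] H)}
  {M : Set X → (H →L[ℂ] H)} {π : Set Y → Set X} {B B' : Set Y}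

theorem IsPVM.apply_inter_eq_zero_of_disjoint (hP : IsPVM P) (hM : IsPOVM M)
    (hπmeas : ∀ B, MeasurableSet B → MeasurableSet (π B))
    (hπ : ∀ B, MeasurableSet B → P B = M (π B)) (hB : MeasurableSet B)
    (hB' : MeasurableSet B') (hd : Disjoint B B') : M (π B ∩ π B') = 0 := by
  have hI := (hπmeas B hB).inter (hπmeas B' hB')
  refine hP.eq_zero_of_le_of_le hB hB' hd (hM.nonneg hI) ?_ ?_
  · exact hπ B hB ▸ hM.mono hI (hπmeas B hB) Set.inter_subset_left
  · exact hπ B' hB' ▸ hM.mono hI (hπmeas B' hB') Set.inter_subset_right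

theorem IsPVM.apply_diff_eq_zero_of_subset (hP : IsPVM P) (hM : IsPOVM M)
    (hπmeas : ∀ B, MeasurableSet B → MeasurableSet (π B))
    (hπ : ∀ B, MeasurableSet B → P B = M (π B)) (hB : MeasurableSet B)
    (hB' : MeasurableSet B') (h : B ⊆ B') : M (π B \ π B') = 0 := by
  have hD := (hπmeas B hB).diff (hπmeas B' hB')
  refine hP.eq_zero_of_le_of_le hB hB'.compl (Set.disjoint_compl_right_iff_subset.2 h)
    (hM.nonneg hD) (hπ B hB ▸ hM.mono hD (hπmeas B hB) Set.sdiff_subset) ?_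
  calc M (π B \ π B') ≤ M (π B')ᶜ := hM.mono hD (hπmeas B' hB').compl fun _ hx => hx.2
    _ = P B'ᶜ := by rw [hM.compl (hπmeas B' hB'), ← hπ B' hB', hP.1.compl hB']

end RangeInclusion

def indicatorKernel {X Y : Type*} (π : Set Y → Set X) (x : X) (B : Set Y) : ℝ :=
  (π B).indicator 1 x

section IndicatorKernel

variable {X Y : Type*} [MeasurableSpace X] [MeasurableSpace Y] {P : Set Y → (H →L[ℂ] H)}
  {M : Set X → (H →L[ℂ] H)} {π : Set Y → Set X}

theorem ae_hasSum_indicatorKernel (hP : IsPVM P) (hM : IsPOVM M)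
    (hπmeas : ∀ B, MeasurableSet B → MeasurableSet (π B))
    (hπ : ∀ B, MeasurableSet B → P B = M (π B)) (ψ : H) (B : ℕ → Set Y)
    (hB : ∀ n, MeasurableSet (B n)) (hd : Pairwise (Function.onFun Disjoint B)) :
    ∀ᵐ x ∂(vecMeasure M ψ),
      HasSum (fun n => indicatorKernel π x (B n)) (indicatorKernel π x (⋃ n, B n)) := by
  have := hM.isFiniteMeasure_vecMeasure ψ
  have hU := MeasurableSet.iUnion hB
  have hPM : ∀ {B}, MeasurableSet B → vecMeasure P ψ B = vecMeasure M ψ (π B) := fun hB => by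
    rw [hP.1.vecMeasure_apply ψ hB, hM.vecMeasure_apply ψ (hπmeas _ hB), hπ _ hB]
  refine ae_hasSum_indicator 1 (fun n => (hπmeas _ (hB n)).nullMeasurableSet)
    (fun n m hnm => hM.vecMeasure_eq_zero ψ ((hπmeas _ (hB n)).inter (hπmeas _ (hB m)))
      (hP.apply_inter_eq_zero_of_disjoint hM hπmeas hπ (hB n) (hB m) (hd hnm)))
    (fun n => ae_le_set.2 (hM.vecMeasure_eq_zero ψ ((hπmeas _ (hB n)).diff (hπmeas _ hU))
      (hP.apply_diff_eq_zero_of_subset hM hπmeas hπ (hB n) hU (Set.subset_iUnion B n))))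
    ?_ (measure_ne_top _ _)
  rw [← hPM hU, measure_iUnion hd hB]
  exact (tsum_congr fun n => hPM (hB n)).le

theorem isWeakMarkovKernel_indicatorKernel (hP : IsPVM P) (hM : IsPOVM M)
    (hπmeas : ∀ B, MeasurableSet B → MeasurableSet (π B))
    (hπ : ∀ B, MeasurableSet B → P B = M (π B)) : IsWeakMarkovKernel M (indicatorKernel π) := by
  have hnull : ∀ {A} (ψ : H), MeasurableSet A → M A = 0 → ∀ᵐ x ∂(vecMeasure M ψ), x ∉ A :=
    fun ψ hA h => measure_eq_zero_iff_ae_notMem.1 (hM.vecMeasure_eq_zero ψ hA h)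
  refine ⟨fun B hB => measurable_const.indicator (hπmeas B hB), fun ψ => ⟨?_, ?_, ?_,
    ae_hasSum_indicatorKernel hP hM hπmeas hπ ψ⟩⟩
  · exact fun B _ => .of_forall fun x => by by_cases h : x ∈ π B <;> simp [indicatorKernel, h]
  · have hU := hπmeas _ .univ
    filter_upwards [hnull ψ hU.compl (by rw [hM.compl hU, ← hπ _ .univ, hP.1.univ, sub_self])]
      with x hx
    simp [indicatorKernel, Set.notMem_compl_iff.1 hx]
  · filter_upwards [hnull ψ (hπmeas _ .empty) (by rw [← hπ _ .empty, hP.1.empty])] with x hx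
    simp [indicatorKernel, hx]

theorem hasZeroOneValues_indicatorKernel {E : Type*} [NormedAddCommGroup E]
    [InnerProductSpace ℂ E] (M : Set X → (E →L[ℂ] E)) (π : Set Y → Set X) :
    HasZeroOneValues M (indicatorKernel π) :=
  fun B _ _ => .of_forall fun x => (π B).indicator_eq_zero_or_self 1 x

theorem isSmearing_indicatorKernel (hM : IsPOVM M)
    (hπmeas : ∀ B, MeasurableSet B → MeasurableSet (π B))
    (hπ : ∀ B, MeasurableSet B → P B = M (π B)) : IsSmearing M (indicatorKernel π) P := by
  intro B hB ψ
  have hself : IsSelfAdjoint (P B) := hπ B hB ▸ (hM.pos _ (hπmeas B hB)).isSelfAdjoint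
  unfold indicatorKernel
  rw [integral_indicator_one (hπmeas B hB), hM.vecMeasure_real_apply ψ (hπmeas B hB), ← hπ B hB]
  exact (hself.isSymmetric.coe_re_inner_self_apply ψ).symm

end IndicatorKernel

theorem indicator_weak_markov_kernel_smearing_general
    {X Y : Type*} [MeasurableSpace X] [MeasurableSpace Y]
    (P : Set Y → (H →L[ℂ] H)) (hP : IsPVM P)
    (M : Set X → (H →L[ℂ] H)) (hM : IsPOVM M)
    (π : Set Y → Set X) (hπmeas : ∀ B : Set Y, MeasurableSet B → MeasurableSet (π B))
    (hπ : ∀ B : Set Y, MeasurableSet B → P B = M (π B))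
    (ν : X → Set Y → ℝ)
    (hνdef : ∀ (x : X) (B : Set Y), ν x B = if x ∈ π B then 1 else 0) :
    IsWeakMarkovKernel M ν ∧ HasZeroOneValues M ν ∧ IsSmearing M ν P := by
  obtain rfl : ν = indicatorKernel π := by
    ext x B
    simp [hνdef, indicatorKernel, Set.indicator_apply]
  exact ⟨isWeakMarkovKernel_indicatorKernel hP hM hπmeas hπ,
    hasZeroOneValues_indicatorKernel M π, isSmearing_indicatorKernel hM hπmeas hπ⟩

/-- If `ℛ(P) ⊆ ℛ(M)` via `π : ℬ → 𝒜` with `P(B) = M(π(B))`, then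
`ν(x,B) := χ_{π(B)}(x)` is a weak Markov kernel with respect to `M`, with values in
`{0,1}`, and `P = ν ∘ M`. -/
theorem indicator_weak_markov_kernel_smearing
    [TopologicalSpace.SeparableSpace H]
    {X Y : Type*} [MeasurableSpace X] [MeasurableSpace Y]
    (P : Set Y → (H →L[ℂ] H)) (hP : IsPVM P)
    (M : Set X → (H →L[ℂ] H)) (hM : IsPOVM M)
    (π : Set Y → Set X) (hπmeas : ∀ B : Set Y, MeasurableSet B → MeasurableSet (π B))
    (hπ : ∀ B : Set Y, MeasurableSet B → P B = M (π B))
    (ν : X → Set Y → ℝ)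
    (hνdef : ∀ (x : X) (B : Set Y), ν x B = if x ∈ π B then 1 else 0) :
    IsWeakMarkovKernel M ν ∧ HasZeroOneValues M ν ∧ IsSmearing M ν P :=
  indicator_weak_markov_kernel_smearing_general P hP M hM π hπmeas hπ ν hνdef

end
end
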